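/- arXiv:cs/0310027 — 5 statements merged into one kernel-verified Lean document; each statement's English description precedes it below -/
import Mathlib

section
/- For a triangle τ with vertices A, B, C in the plane, where edge AB is horizontal with length a, the altitude from C has length c, and the foot of the altitude from C is at distance b from A along line AB, the average L1 distance from points of τ to the vertex A equals (a + b + c)/3. -/
/-!
On the triangle (which lies in the closed first quadrant because `b ≥ 0`) the L1 distance to the
origin is the linear function `x + y`, and the mean of an affine function over a triangle is its
value at the centroid `((a + b) / 3, c / 3)`. The mean is computed by Fubini over horizontal slices:
the slice at height `y ∈ [0, c]` is the segment `[b y / c, a + (b - a) y / c]`.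
-/

open MeasureTheory Set

/-- Like `regionBetween`, but with the roles of the coordinates exchanged and closed intervals:
the points `(x, y)` with `y ∈ s` and `l y ≤ x ≤ r y`. -/
def xRegionBetween (l r : ℝ → ℝ) (s : Set ℝ) : Set (ℝ × ℝ) :=
  {p | p.2 ∈ s ∧ p.1 ∈ Icc (l p.2) (r p.2)}

section xRegionBetween

variable {l r : ℝ → ℝ} {s : Set ℝ}

theorem measurableSet_xRegionBetween (hl : Measurable l) (hr : Measurable r)
    (hs : MeasurableSet s) : MeasurableSet (xRegionBetween l r s) :=
  (measurable_snd hs).inter <|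
    (measurableSet_le (hl.comp measurable_snd) measurable_fst).inter
      (measurableSet_le measurable_fst (hr.comp measurable_snd))

theorem setIntegral_xRegionBetween (hl : Measurable l) (hr : Measurable r) (hs : MeasurableSet s)
    {f : ℝ × ℝ → ℝ} (hf : IntegrableOn f (xRegionBetween l r s)) :
    ∫ p in xRegionBetween l r s, f p = ∫ y in s, ∫ x in Icc (l y) (r y), f (x, y) := by
  have hm := measurableSet_xRegionBetween hl hr hs
  have hslice : ∀ y, ∫ x, (xRegionBetween l r s).indicator f (x, y) =
      s.indicator (fun y => ∫ x in Icc (l y) (r y), f (x, y)) y := by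
    intro y
    by_cases hy : y ∈ s
    · rw [indicator_of_mem hy, ← integral_indicator measurableSet_Icc]
      congr 1 with x
      simp [indicator, xRegionBetween, hy]
    · simp [indicator, xRegionBetween, hy]
  rw [← integral_indicator hm, Measure.volume_eq_prod,
    integral_prod_symm _ ((integrable_indicator_iff hm).2 hf)]
  simp_rw [hslice]
  exact integral_indicator hs

theorem convex_xRegionBetween (hs : Convex ℝ s) (hl : ConvexOn ℝ s l) (hr : ConcaveOn ℝ s r) :
    Convex ℝ (xRegionBetween l r s) := by
  rintro p ⟨hps, hpl, hpr⟩ q ⟨hqs, hql, hqr⟩ θ μ hθ hμ hθμ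
  refine ⟨hs hps hqs hθ hμ hθμ, ?_, ?_⟩
  · calc l (θ * p.2 + μ * q.2) ≤ θ * l p.2 + μ * l q.2 := hl.2 hps hqs hθ hμ hθμ
      _ ≤ θ * p.1 + μ * q.1 := by gcongr
  · calc θ * p.1 + μ * q.1 ≤ θ * r p.2 + μ * r q.2 := by gcongr
      _ ≤ r (θ * p.2 + μ * q.2) := hr.2 hps hqs hθ hμ hθμ

end xRegionBetween

theorem smul_add_smul_add_smul_mem_convexHull {𝕜 E : Type*} [Field 𝕜] [LinearOrder 𝕜]
    [IsStrictOrderedRing 𝕜] [AddCommGroup E] [Module 𝕜 E] {P Q R : E} {α β γ : 𝕜}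
    (hα : 0 ≤ α) (hβ : 0 ≤ β) (hγ : 0 ≤ γ) (hαβγ : α + β + γ = 1) :
    α • P + β • Q + γ • R ∈ convexHull 𝕜 {P, Q, R} := by
  have h := (convex_convexHull 𝕜 {P, Q, R}).sum_mem (t := Finset.univ) (w := ![α, β, γ])
    (z := ![P, Q, R]) (fun i _ => by fin_cases i <;> assumption)
    (by simpa [Fin.sum_univ_three] using hαβγ)
    (fun i _ => subset_convexHull 𝕜 _ (by fin_cases i <;> simp))
  simpa [Fin.sum_univ_three, add_assoc] using h

theorem integral_const_add_mul (k u s t : ℝ) :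
    ∫ x in s..t, (k + u * x) = (t - s) * (k + u * (s + t) / 2) := by
  rw [intervalIntegral.integral_add intervalIntegrable_const
    ((continuous_const_mul u).intervalIntegrable s t), intervalIntegral.integral_const_mul]
  simp only [intervalIntegral.integral_const, smul_eq_mul, integral_id]
  ring

theorem integral_affine_mul_affine (p q r s t : ℝ) :
    ∫ y in (0 : ℝ)..t, (p + q * y) * (r + s * y) =
      t * (p * r + (p * s + q * r) * t / 2 + q * s * t ^ 2 / 3) := by
  have hF : ∀ y : ℝ, HasDerivAt
      (fun y => p * r * y + (p * s + q * r) * y ^ 2 / 2 + q * s * y ^ 3 / 3)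
      ((p + q * y) * (r + s * y)) y := by
    intro y
    refine ((((hasDerivAt_id' y).const_mul (p * r)).add
      (((hasDerivAt_pow 2 y).const_mul (p * s + q * r)).div_const 2)).add
      (((hasDerivAt_pow 3 y).const_mul (q * s)).div_const 3)).congr_deriv ?_
    norm_num
    ring
  rw [intervalIntegral.integral_eq_sub_of_hasDerivAt (fun y _ => hF y)
    (Continuous.intervalIntegrable (by fun_prop) _ _)]
  ring

section Triangle

variable {a c : ℝ}

theorem convexHull_triangle_eq_xRegionBetween (ha : 0 < a) (hc : 0 < c) (b : ℝ) :
    convexHull ℝ {((0 : ℝ), (0 : ℝ)), (a, 0), (b, c)} =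
      xRegionBetween (fun y => b / c * y) (fun y => a + (b - a) / c * y) (Icc 0 c) := by
  apply Subset.antisymm
  · refine convexHull_min ?_ (convex_xRegionBetween (convex_Icc 0 c) ?_ ?_)
    · simp [insert_subset_iff, xRegionBetween, ha.le, hc.le, hc.ne']
    · exact (LinearMap.mulLeft ℝ (b / c)).convexOn (convex_Icc 0 c)
    · exact (concaveOn_const a (convex_Icc 0 c)).add
        ((LinearMap.mulLeft ℝ ((b - a) / c)).concaveOn (convex_Icc 0 c))
  · rintro ⟨x, y⟩ ⟨⟨hy0, hyc⟩, hl, hr⟩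
    dsimp only at hy0 hyc hl hr
    have hbary : ((x, y) : ℝ × ℝ) = (1 - (x - b / c * y) / a - y / c) • ((0 : ℝ), (0 : ℝ)) +
        ((x - b / c * y) / a) • (a, 0) + (y / c) • (b, c) := by
      simp only [Prod.smul_mk, smul_eq_mul, mul_zero, Prod.mk_add_mk, zero_add, add_zero]
      congr 1
      · field_simp
        ring
      · field_simp
    rw [hbary]
    refine smul_add_smul_add_smul_mem_convexHull ?_ (div_nonneg (sub_nonneg.2 hl) ha.le)
      (div_nonneg hy0 hc.le) (by ring)
    have : (x - b / c * y) / a ≤ 1 - y / c := by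
      rw [div_le_iff₀ ha, show (1 - y / c) * a = a + (b - a) / c * y - b / c * y by ring]
      linarith
    linarith

theorem integral_affine_convexHull_triangle (ha : 0 < a) (hc : 0 < c) (b k u v : ℝ) :
    ∫ p in convexHull ℝ {((0 : ℝ), (0 : ℝ)), (a, 0), (b, c)}, (k + u * p.1 + v * p.2) =
      a * c / 2 * (k + u * (a + b) / 3 + v * c / 3) := by
  have hint : IntegrableOn (fun p : ℝ × ℝ => k + u * p.1 + v * p.2)
      (convexHull ℝ {((0 : ℝ), (0 : ℝ)), (a, 0), (b, c)}) :=
    (by fun_prop : Continuous _).continuousOn.integrableOn_compact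
      ((toFinite _).isCompact_convexHull ℝ)
  rw [convexHull_triangle_eq_xRegionBetween ha hc] at hint ⊢
  have hslice : ∀ y ∈ uIcc 0 c, ∫ x in Icc (b / c * y) (a + (b - a) / c * y), (k + u * x + v * y) =
      (a + -a / c * y) * (k + u * a / 2 + (v + u * (2 * b - a) / (2 * c)) * y) := by
    intro y hy
    rw [uIcc_of_le hc.le] at hy
    have hlr : b / c * y ≤ a + (b - a) / c * y := by
      have : 0 ≤ a * (1 - y / c) := mul_nonneg ha.le (sub_nonneg.2 ((div_le_one hc).2 hy.2))
      linarith [show a + (b - a) / c * y - b / c * y = a * (1 - y / c) by ring]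
    rw [integral_Icc_eq_integral_Ioc, ← intervalIntegral.integral_of_le hlr,
      show (fun x => k + u * x + v * y) = fun x => k + v * y + u * x by ext; ring,
      integral_const_add_mul]
    ring
  rw [setIntegral_xRegionBetween (by fun_prop) (by fun_prop) measurableSet_Icc hint,
    integral_Icc_eq_integral_Ioc, ← intervalIntegral.integral_of_le hc.le,
    intervalIntegral.integral_congr hslice, integral_affine_mul_affine]
  field_simp
  ring

end Triangle

/-- The average L1 distance from points of a nondegenerate triangle with
vertices `A = (0,0)`, `B = (a,0)`, `C = (b,c)` (so `AB` horizontal of length `a`,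
altitude from `C` of length `c`, foot of the altitude at distance `b` from `A`)
to the vertex `A` equals `(a + b + c)/3`. -/
theorem average_L1_distance_triangle (a b c : ℝ) (ha : 0 < a) (hb : 0 ≤ b) (hc : 0 < c)
    (τ : Set (ℝ × ℝ))
    (hτ : τ = convexHull ℝ {((0 : ℝ), (0 : ℝ)), (a, 0), (b, c)}) :
    (volume τ).toReal⁻¹ * ∫ p in τ, (|p.1 - 0| + |p.2 - 0|) = (a + b + c) / 3 := by
  have hvol : (volume τ).toReal = a * c / 2 := by
    simpa [hτ, measureReal_def] using integral_affine_convexHull_triangle ha hc b 1 0 0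
  have hquadrant : τ ⊆ Ici 0 := hτ ▸
    convexHull_min (by simp [insert_subset_iff, Prod.le_def, ha.le, hb, hc.le]) (convex_Ici 0)
  have hL1 : EqOn (fun p : ℝ × ℝ => |p.1 - 0| + |p.2 - 0|) (fun p => 0 + 1 * p.1 + 1 * p.2) τ := by
    intro p hp
    obtain ⟨hx, hy⟩ := hquadrant hp
    simp [abs_of_nonneg hx, abs_of_nonneg hy]
  have hτm : MeasurableSet τ := hτ ▸ ((toFinite _).isCompact_convexHull ℝ).isClosed.measurableSet
  rw [setIntegral_congr_fun hτm hL1, hτ, integral_affine_convexHull_triangle ha hc, ← hτ, hvol]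
  field_simp
  ring
end

section
/- Let P ⊆ ℝ² be a compact set of positive area μ, and define f(Z) = ∫_P ‖Z − p‖₁ dp. For Z = (x,y) such that the vertical line {u = x} intersects P in a set of measure zero, the partial derivative of f with respect to x at Z exists and equals w(Z) − e(Z), where w(Z) is the area of {(u,v) ∈ P : u < x} and e(Z) is the area of {(u,v) ∈ P : u > x}. -/
/-!
Differentiate under the integral sign. For each `p`, `t ↦ |t - p.1|` is `1`-Lipschitz and,
as soon as `p.1 ≠ x`, has derivative `sign (x - p.1)` at `x`; since the line `p.1 = x` is
null, dominated differentiation gives the derivative `∫_P sign (x - p.1) dp = w(Z) - e(Z)`.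
The term `|y - p.2|` does not depend on `t`.
-/

open MeasureTheory

theorem hasDerivAt_abs_sub {c x : ℝ} (h : c ≠ x) :
    HasDerivAt (fun t => |t - c|) (SignType.sign (x - c) : ℝ) x := by
  simpa using (hasDerivAt_abs (sub_ne_zero.2 h.symm)).comp_sub_const x c

section

variable {α : Type*}

theorem sign_sub_eq_indicator_sub_indicator (g : α → ℝ) (x : ℝ) :
    (fun a => (SignType.sign (x - g a) : ℝ)) =
      fun a => {a | g a < x}.indicator 1 a - {a | x < g a}.indicator 1 a := by
  funext a
  rcases lt_trichotomy (g a) x with h | h | h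
  · simp [Set.indicator, h, h.not_gt]
  · simp [Set.indicator, h]
  · simp [Set.indicator, h, h.not_gt]

variable [MeasurableSpace α] {μ : Measure α} {g : α → ℝ}

theorem integral_sign_sub [IsFiniteMeasure μ] (hg : Measurable g) (x : ℝ) :
    ∫ a, (SignType.sign (x - g a) : ℝ) ∂μ = μ.real {a | g a < x} - μ.real {a | x < g a} := by
  have hlt : MeasurableSet {a | g a < x} := measurableSet_lt hg measurable_const
  have hgt : MeasurableSet {a | x < g a} := measurableSet_lt measurable_const hg
  rw [sign_sub_eq_indicator_sub_indicator, integral_sub ((integrable_const 1).indicator hlt)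
    ((integrable_const 1).indicator hgt), integral_indicator_one hlt, integral_indicator_one hgt]

theorem hasDerivAt_integral_abs_sub [IsFiniteMeasure μ] (hg_meas : Measurable g)
    (hg : Integrable g μ) {x : ℝ} (hx : μ {a | g a = x} = 0) :
    HasDerivAt (fun t => ∫ a, |t - g a| ∂μ) (μ.real {a | g a < x} - μ.real {a | x < g a}) x := by
  have hsign_meas : AEStronglyMeasurable (fun a => (SignType.sign (x - g a) : ℝ)) μ := by
    rw [sign_sub_eq_indicator_sub_indicator]
    exact ((measurable_const.indicator (measurableSet_lt hg_meas measurable_const)).sub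
      (measurable_const.indicator (measurableSet_lt measurable_const hg_meas))).aestronglyMeasurable
  have hderiv : ∀ᵐ a ∂μ, HasDerivAt (fun t => |t - g a|) (SignType.sign (x - g a) : ℝ) x :=
    (measure_eq_zero_iff_ae_notMem.1 hx).mono fun a ha => hasDerivAt_abs_sub ha
  have hlip : ∀ a, LipschitzWith 1 fun t => |t - g a| := fun a => by
    simpa [Real.dist_eq] using LipschitzWith.dist_left (g a)
  rw [← integral_sign_sub hg_meas]
  refine (hasDerivAt_integral_of_dominated_loc_of_lip (bound := fun _ => 1) Filter.univ_mem
    (Filter.Eventually.of_forall fun t => ((integrable_const t).sub hg).abs.aestronglyMeasurable)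
    ((integrable_const x).sub hg).abs hsign_meas
    (Filter.Eventually.of_forall fun a => by simpa using hlip a)
    (integrable_const 1) hderiv).2

end

theorem partial_derivative_average_L1_general (P : Set (ℝ × ℝ)) (hP : IsCompact P)
    (x y : ℝ)
    (hline : volume {p : ℝ × ℝ | p ∈ P ∧ p.1 = x} = 0) :
    HasDerivAt (fun t : ℝ => ∫ p in P, (|t - p.1| + |y - p.2|))
      ((volume {p : ℝ × ℝ | p ∈ P ∧ p.1 < x}).toReal
        - (volume {p : ℝ × ℝ | p ∈ P ∧ x < p.1}).toReal) x := by
  have hPm : MeasurableSet P := hP.measurableSet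
  have : IsFiniteMeasure (volume.restrict P) := isFiniteMeasure_restrict.2 hP.measure_ne_top
  have hrestrict (s : Set (ℝ × ℝ)) : volume.restrict P s = volume {p | p ∈ P ∧ p ∈ s} := by
    rw [Measure.restrict_apply' hPm, Set.inter_comm]; rfl
  have hsplit : (fun t : ℝ => ∫ p in P, (|t - p.1| + |y - p.2|)) =
      fun t => (∫ p in P, |t - p.1|) + ∫ p in P, |y - p.2| := by
    funext t
    exact integral_add
      ((continuous_const.sub continuous_fst).abs.continuousOn.integrableOn_compact hP)
      ((continuous_const.sub continuous_snd).abs.continuousOn.integrableOn_compact hP)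
  rw [hsplit]
  have hderiv := hasDerivAt_integral_abs_sub measurable_fst
    (continuous_fst.continuousOn.integrableOn_compact hP) (by rw [hrestrict]; exact hline)
  simp only [Measure.real, hrestrict] at hderiv
  exact hderiv.add_const _

/-- Partial derivative in `x` of `f(Z) = ∫_P ‖Z − p‖₁ dp`: if the vertical line
through `x` meets `P` in measure zero, the derivative of `t ↦ f(t,y)` at `x`
exists and equals `w(Z) − e(Z)`, the difference of the areas of the parts of
`P` to the left and to the right of the vertical line through `Z`. -/
theorem partial_derivative_average_L1 (P : Set (ℝ × ℝ)) (hP : IsCompact P)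
    (hpos : 0 < volume P) (x y : ℝ)
    (hline : volume {p : ℝ × ℝ | p ∈ P ∧ p.1 = x} = 0) :
    HasDerivAt (fun t : ℝ => ∫ p in P, (|t - p.1| + |y - p.2|))
      ((volume {p : ℝ × ℝ | p ∈ P ∧ p.1 < x}).toReal
        - (volume {p : ℝ × ℝ | p ∈ P ∧ x < p.1}).toReal) x :=
  partial_derivative_average_L1_general P hP x y hline
end

section
/- Let P ⊆ ℝ² be a compact set of positive area μ, Z_m = (x_m, y_m) a point such that x_m is a median of the x-marginal and y_m a median of the y-marginal of the uniform distribution on P. Let p₁ = (x₁,y₁) and p₂ = (x₂,y₂) be points with x_m ≤ x₁ ≤ x₂ and y_m ≤ y₁ ≤ y₂ (p₁ dominates p₂). Then f(p₁) ≤ f(p₂), where f(Z) = ∫_P ‖Z − p‖₁ dp. -/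
/-!
The ℓ¹ distance splits into coordinates, so it suffices to compare `∫ |a - φ|` with `∫ |b - φ|`
for `a ≤ b` on the same side of a median `m ≤ a` of `φ`. Moving from `a` to `b` increases
`|· - φ x|` by exactly `b - a` where `φ x ≤ a`, which carries at least half of the mass, and
decreases it by at most `b - a` elsewhere.
-/

open MeasureTheory Set

theorem mul_indicator_Iic_le_abs_sub_sub_abs_sub {a b : ℝ} (hab : a ≤ b) (x : ℝ) :
    (b - a) * (2 * (Iic a).indicator 1 x - 1) ≤ |b - x| - |a - x| := by
  by_cases hx : x ≤ a
  · rw [indicator_of_mem (mem_Iic.2 hx), abs_of_nonneg (by linarith),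
      abs_of_nonneg (by linarith)]
    simp only [Pi.one_apply]; linarith
  · rw [indicator_of_notMem (mt mem_Iic.1 hx), abs_of_neg (by linarith : a - x < 0)]
    linarith [neg_abs_le (b - x)]

theorem integral_abs_sub_mono_of_le_median {α : Type*} [MeasurableSpace α] {μ : Measure α}
    [IsFiniteMeasure μ] {φ : α → ℝ} (hφm : Measurable φ) (hφ : Integrable φ μ) {m a b : ℝ}
    (hm : μ univ / 2 ≤ μ {x | φ x ≤ m}) (hma : m ≤ a) (hab : a ≤ b) :
    ∫ x, |a - φ x| ∂μ ≤ ∫ x, |b - φ x| ∂μ := by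
  set s := φ ⁻¹' Iic a
  have hs : MeasurableSet s := hφm measurableSet_Iic
  have hhalf : μ.real univ ≤ 2 * μ.real s := by
    have h : μ univ / 2 ≤ μ s := hm.trans (measure_mono fun x (hx : φ x ≤ m) => hx.trans hma)
    have := ENNReal.toReal_mono (measure_ne_top μ _) h
    rw [ENNReal.toReal_div, ENNReal.toReal_ofNat] at this
    simp only [measureReal_def]; linarith
  have hind : Integrable (fun x => (b - a) * (2 * s.indicator 1 x - 1)) μ :=
    ((((integrable_const 1).indicator hs).const_mul 2).sub (integrable_const 1)).const_mul _
  have hA : Integrable (fun x => |a - φ x|) μ := ((integrable_const a).sub hφ).abs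
  have hB : Integrable (fun x => |b - φ x|) μ := ((integrable_const b).sub hφ).abs
  calc ∫ x, |a - φ x| ∂μ
      ≤ ∫ x, |a - φ x| ∂μ + (b - a) * (2 * μ.real s - μ.real univ) := by
        have : 0 ≤ (b - a) * (2 * μ.real s - μ.real univ) :=
          mul_nonneg (by linarith) (by linarith)
        linarith
    _ = ∫ x, |a - φ x| ∂μ + ∫ x, (b - a) * (2 * s.indicator 1 x - 1) ∂μ := by
        rw [integral_const_mul, integral_sub ((integrable_const 1).indicator hs |>.const_mul 2)
          (integrable_const 1), integral_const_mul, integral_indicator_one hs, integral_const,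
          smul_eq_mul, mul_one]
    _ ≤ ∫ x, |a - φ x| ∂μ + ∫ x, (|b - φ x| - |a - φ x|) ∂μ :=
        add_le_add le_rfl <| integral_mono hind (hB.sub hA) fun x =>
          mul_indicator_Iic_le_abs_sub_sub_abs_sub hab (φ x)
    _ = ∫ x, |b - φ x| ∂μ := by
        rw [integral_sub hB hA]
        ring

theorem dominated_point_not_better_general (P : Set (ℝ × ℝ)) (hP : IsCompact P)
    (xm ym x₁ y₁ x₂ y₂ : ℝ)
    (hxm₁ : volume P / 2 ≤ volume {p : ℝ × ℝ | p ∈ P ∧ p.1 ≤ xm})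
    (hym₁ : volume P / 2 ≤ volume {p : ℝ × ℝ | p ∈ P ∧ p.2 ≤ ym})
    (hx1 : xm ≤ x₁) (hx2 : x₁ ≤ x₂) (hy1 : ym ≤ y₁) (hy2 : y₁ ≤ y₂) :
    (∫ p in P, (|x₁ - p.1| + |y₁ - p.2|)) ≤ ∫ p in P, (|x₂ - p.1| + |y₂ - p.2|) := by
  have : IsFiniteMeasure (volume.restrict P) := isFiniteMeasure_restrict.2 hP.measure_lt_top.ne
  have hmedian {φ : ℝ × ℝ → ℝ} {m : ℝ} (h : volume P / 2 ≤ volume {p | p ∈ P ∧ φ p ≤ m}) :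
      volume.restrict P univ / 2 ≤ volume.restrict P {p | φ p ≤ m} := by
    rwa [Measure.restrict_apply_univ, Measure.restrict_apply' hP.measurableSet, inter_comm]
  have hint {φ : ℝ × ℝ → ℝ} (hφ : Continuous φ) (c : ℝ) : IntegrableOn (fun p => |c - φ p|) P :=
    ((continuous_const.sub hφ).abs).continuousOn.integrableOn_compact hP
  rw [integral_add (hint continuous_fst x₁) (hint continuous_snd y₁),
    integral_add (hint continuous_fst x₂) (hint continuous_snd y₂)]
  exact add_le_add
    (integral_abs_sub_mono_of_le_median measurable_fst
      (continuous_fst.continuousOn.integrableOn_compact hP) (hmedian hxm₁) hx1 hx2)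
    (integral_abs_sub_mono_of_le_median measurable_snd
      (continuous_snd.continuousOn.integrableOn_compact hP) (hmedian hym₁) hy1 hy2)

/-- Domination lemma: if `Z_m = (x_m, y_m)` is a coordinatewise median of the
uniform distribution on a compact set `P` of positive area, and
`x_m ≤ x₁ ≤ x₂`, `y_m ≤ y₁ ≤ y₂` (so `p₁ = (x₁,y₁)` dominates `p₂ = (x₂,y₂)`),
then `f(p₁) ≤ f(p₂)` for `f(Z) = ∫_P ‖Z − p‖₁ dp`. -/
theorem dominated_point_not_better (P : Set (ℝ × ℝ)) (hP : IsCompact P)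
    (hpos : 0 < volume P) (xm ym x₁ y₁ x₂ y₂ : ℝ)
    (hxm₁ : volume P / 2 ≤ volume {p : ℝ × ℝ | p ∈ P ∧ p.1 ≤ xm})
    (hxm₂ : volume P / 2 ≤ volume {p : ℝ × ℝ | p ∈ P ∧ xm ≤ p.1})
    (hym₁ : volume P / 2 ≤ volume {p : ℝ × ℝ | p ∈ P ∧ p.2 ≤ ym})
    (hym₂ : volume P / 2 ≤ volume {p : ℝ × ℝ | p ∈ P ∧ ym ≤ p.2})
    (hx1 : xm ≤ x₁) (hx2 : x₁ ≤ x₂) (hy1 : ym ≤ y₁) (hy2 : y₁ ≤ y₂) :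
    (∫ p in P, (|x₁ - p.1| + |y₁ - p.2|)) ≤ ∫ p in P, (|x₂ - p.1| + |y₂ - p.2|) :=
  dominated_point_not_better_general P hP xm ym x₁ y₁ x₂ y₂ hxm₁ hym₁ hx1 hx2 hy1 hy2
end

section
/- Let P ⊆ ℝ² be a compact set of positive area μ and f(Z) = ∫_P ‖Z−p‖₁ dp. If Z = (x,y) with λ({(u,v)∈P : u < x}) < λ({(u,v)∈P : u > x}), then Z is not a local minimum of f: indeed, for all sufficiently small h > 0, f(x+h, y) < f(x, y). -/
/-!
Moving `Z` east by `h > 0` lowers `|x - u|` by exactly `h` for every point with `u > x + h` and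
raises it by at most `h` elsewhere, so the only thing that matters is the first coordinate `u`,
whose law `ν` on `ℝ` gives `f(x + h, y) - f(x, y) ≤ h (2 ν(-∞, x + h] - ν(ℝ))`. By right continuity
of `s ↦ ν(-∞, s]` the bracket tends to `ν(-∞, x] - ν(x, ∞)`, which is `w(Z) - e(Z) < 0` because
vertical lines are Lebesgue-null.
-/

open MeasureTheory Filter Set Topology

lemma abs_add_sub_abs_le_indicator_sub {x h : ℝ} (hh : 0 ≤ h) (t : ℝ) :
    |x + h - t| - |x - t| ≤ (Iic (x + h)).indicator (fun _ ↦ 2 * h) t - h := by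
  by_cases ht : t ≤ x + h
  · have := abs_sub_abs_le_abs_sub (x + h - t) (x - t)
    rw [show x + h - t - (x - t) = h by ring, abs_of_nonneg hh] at this
    rw [indicator_of_mem (show t ∈ Iic (x + h) from ht)]
    linarith
  · rw [indicator_of_notMem (show t ∉ Iic (x + h) from ht), abs_of_neg (by linarith),
      abs_of_neg (by linarith)]
    linarith

section L1Cost

variable {ν : Measure ℝ} [IsFiniteMeasure ν]

lemma integral_abs_add_sub_abs_le (x : ℝ) {h : ℝ} (hh : 0 ≤ h) :
    ∫ t, (|x + h - t| - |x - t|) ∂ν ≤ h * (2 * ν.real (Iic (x + h)) - ν.real univ) := by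
  have hbound : ∀ t, ‖|x + h - t| - |x - t|‖ ≤ h := fun t ↦ by
    simpa [abs_of_nonneg hh] using abs_abs_sub_abs_le_abs_sub (x + h - t) (x - t)
  calc ∫ t, (|x + h - t| - |x - t|) ∂ν
      ≤ ∫ t, ((Iic (x + h)).indicator (fun _ ↦ 2 * h) t - h) ∂ν := by
        refine integral_mono ((integrable_const h).mono' (by fun_prop) (ae_of_all _ hbound)) ?_
          (abs_add_sub_abs_le_indicator_sub hh)
        exact ((integrable_const _).indicator measurableSet_Iic).sub (integrable_const _)
    _ = h * (2 * ν.real (Iic (x + h)) - ν.real univ) := by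
        rw [integral_sub ((integrable_const _).indicator measurableSet_Iic) (integrable_const _),
          integral_indicator_const _ measurableSet_Iic, integral_const]
        simp only [smul_eq_mul]
        ring

lemma tendsto_measure_Iic_add_nhdsGT (x : ℝ) :
    Tendsto (fun h ↦ ν (Iic (x + h))) (𝓝[>] 0) (𝓝 (ν (Iic x))) := by
  have hIic : ⋂ h > (0 : ℝ), Iic (x + h) = Iic x := by
    ext t
    simp only [mem_iInter, mem_Iic]
    refine ⟨fun ht ↦ le_of_forall_pos_le_add ht, fun ht h hh ↦ by linarith⟩
  rw [← hIic]
  exact tendsto_measure_biInter_gt (fun _ _ ↦ measurableSet_Iic.nullMeasurableSet)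
    (fun _ _ _ hij ↦ Iic_subset_Iic.2 (by linarith)) ⟨1, one_pos, measure_ne_top _ _⟩

theorem eventually_integral_abs_add_sub_abs_neg {x : ℝ} (hx : ν (Iic x) < ν (Ioi x)) :
    ∀ᶠ h in 𝓝[>] 0, ∫ t, (|x + h - t| - |x - t|) ∂ν < 0 := by
  have hhalf : ν.real (Iic x) < ν.real univ / 2 := by
    have hsplit := measureReal_add_measureReal_compl (μ := ν) (measurableSet_Iic (a := x))
    have hlt : ν.real (Iic x) < ν.real (Ioi x) :=
      (ENNReal.toReal_lt_toReal (measure_ne_top _ _) (measure_ne_top _ _)).2 hx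
    rw [compl_Iic] at hsplit
    linarith
  have hlim : Tendsto (fun h ↦ ν.real (Iic (x + h))) (𝓝[>] 0) (𝓝 (ν.real (Iic x))) :=
    (ENNReal.tendsto_toReal (measure_ne_top _ _)).comp (tendsto_measure_Iic_add_nhdsGT x)
  filter_upwards [hlim.eventually_lt_const hhalf, self_mem_nhdsWithin] with h hlt (hh : 0 < h)
  calc _ ≤ h * (2 * ν.real (Iic (x + h)) - ν.real univ) := integral_abs_add_sub_abs_le x hh.le
    _ < 0 := mul_neg_of_pos_of_neg hh (by linarith)

end L1Cost

lemma MeasureTheory.Measure.prod_fst_preimage_singleton {α β : Type*} [MeasurableSpace α] [MeasurableSpace β]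
    (μ : Measure α) [NullSingletonClass μ] (ν : Measure β) [SFinite ν] (a : α) :
    μ.prod ν (Prod.fst ⁻¹' {a}) = 0 := by
  rw [← prod_univ, Measure.prod_prod, measure_singleton, zero_mul]

theorem unbalanced_not_local_min_general (P : Set (ℝ × ℝ)) (hP : IsCompact P)
    (x y : ℝ)
    (hlt : volume {p : ℝ × ℝ | p ∈ P ∧ p.1 < x} < volume {p : ℝ × ℝ | p ∈ P ∧ x < p.1}) :
    ∃ ε > 0, ∀ h : ℝ, 0 < h → h < ε →
      (∫ p in P, (|x + h - p.1| + |y - p.2|)) < ∫ p in P, (|x - p.1| + |y - p.2|) := by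
  have : IsFiniteMeasure (volume.restrict P) := isFiniteMeasure_restrict.2 hP.measure_ne_top
  set ν := (volume.restrict P).map Prod.fst
  have hν : ∀ s, MeasurableSet s → ν s = volume {p : ℝ × ℝ | p ∈ P ∧ p.1 ∈ s} := fun s hs ↦ by
    rw [Measure.map_apply measurable_fst hs, Measure.restrict_apply' hP.measurableSet, inter_comm]
    rfl
  have hνx : ν {x} = 0 := by
    rw [hν _ (measurableSet_singleton x)]
    exact measure_mono_null (fun p hp ↦ hp.2) (Measure.prod_fst_preimage_singleton volume volume x)
  have hunbalanced : ν (Iic x) < ν (Ioi x) := by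
    rwa [← measure_congr (Iio_ae_eq_Iic' hνx), hν _ measurableSet_Iio, hν _ measurableSet_Ioi]
  obtain ⟨ε, hε, hdescent⟩ :=
    mem_nhdsGT_iff_exists_Ioo_subset.1 (eventually_integral_abs_add_sub_abs_neg hunbalanced)
  refine ⟨ε, hε, fun h hh hhε ↦ ?_⟩
  have hint : ∀ a, IntegrableOn (fun p : ℝ × ℝ ↦ |a - p.1| + |y - p.2|) P :=
    fun a ↦ (by fun_prop : Continuous fun p : ℝ × ℝ ↦ |a - p.1| + |y - p.2|).continuousOn
      |>.integrableOn_compact hP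
  rw [← sub_neg, ← integral_sub (hint _) (hint _)]
  have hstep : ∫ t, (|x + h - t| - |x - t|) ∂ν < 0 := hdescent ⟨hh, hhε⟩
  rw [integral_map measurable_fst.aemeasurable (by fun_prop)] at hstep
  simpa only [add_sub_add_right_eq_sub] using hstep

/-- If at `Z = (x,y)` the western area `w(Z) = λ({(u,v)∈P : u < x})` is strictly
smaller than the eastern area `e(Z) = λ({(u,v)∈P : u > x})`, then `Z` is not a
local minimum of `f(Z) = ∫_P ‖Z−p‖₁ dp`: moving east strictly decreases `f`. -/
theorem unbalanced_not_local_min (P : Set (ℝ × ℝ)) (hP : IsCompact P)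
    (hpos : 0 < volume P) (x y : ℝ)
    (hlt : volume {p : ℝ × ℝ | p ∈ P ∧ p.1 < x} < volume {p : ℝ × ℝ | p ∈ P ∧ x < p.1}) :
    ∃ ε > 0, ∀ h : ℝ, 0 < h → h < ε →
      (∫ p in P, (|x + h - p.1| + |y - p.2|)) < ∫ p in P, (|x - p.1| + |y - p.2|) :=
  unbalanced_not_local_min_general P hP x y hlt
end

section
/- Let p₁, p₂ ∈ ℝ² with p₁ = (a₁,b₁), p₂ = (a₂,b₂), a₁ ≠ a₂, b₁ ≠ b₂, and |a₁ − a₂| ≠ |b₁ − b₂|. Then the L1 bisector B = {q ∈ ℝ² : ‖q − p₁‖₁ = ‖q − p₂‖₁} has 2-dimensional Lebesgue measure zero. -/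
/-!
On the vertical line through `x`, the bisector condition reads `f y = g x` with
`f y = |y - b₁| - |y - b₂|` and `g x = |x - a₂| - |x - a₁|`. The function `f` equals `±(b₁ - b₂)`
on the two outer half-lines and is strictly monotone in between, so it takes every value `c`
with `|c| ≠ |b₁ - b₂|` at most once; likewise for `g`. Since `|a₁ - a₂| ≠ |b₁ - b₂|`, `g` takes
the two values `±(b₁ - b₂)` at most at two points, so almost every vertical slice of the bisector
is at most a point, and Fubini finishes.
-/

open MeasureTheory

theorem subsingleton_abs_sub_sub_abs_sub_eq {b₁ b₂ c : ℝ} (hc : |c| ≠ |b₁ - b₂|) :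
    {y : ℝ | |y - b₁| - |y - b₂| = c}.Subsingleton := by
  have hc₁ : c ≠ b₁ - b₂ := by rintro rfl; exact hc rfl
  have hc₂ : c ≠ b₂ - b₁ := by rintro rfl; exact hc (abs_sub_comm _ _)
  intro y₁ (h₁ : |y₁ - b₁| - |y₁ - b₂| = c) y₂ (h₂ : |y₂ - b₁| - |y₂ - b₂| = c)
  rcases hc₁.lt_or_gt with h | h <;> rcases hc₂.lt_or_gt with h' | h' <;>
  rcases abs_cases (y₁ - b₁) with ⟨e₁, s₁⟩ | ⟨e₁, s₁⟩ <;>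
  rcases abs_cases (y₁ - b₂) with ⟨e₂, s₂⟩ | ⟨e₂, s₂⟩ <;>
  rcases abs_cases (y₂ - b₁) with ⟨e₃, s₃⟩ | ⟨e₃, s₃⟩ <;>
  rcases abs_cases (y₂ - b₂) with ⟨e₄, s₄⟩ | ⟨e₄, s₄⟩ <;>
  linarith

namespace MeasureTheory.Measure

theorem measure_prod_null_of_ae_subsingleton {α β : Type*} [MeasurableSpace α]
    [MeasurableSpace β] {μ : Measure α} {ν : Measure β} [SFinite ν] [NullSingletonClass ν]
    {s : Set (α × β)} (hs : MeasurableSet s) (h : ∀ᵐ x ∂μ, (Prod.mk x ⁻¹' s).Subsingleton) :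
    μ.prod ν s = 0 :=
  measure_prod_null_of_ae_null hs <| h.mono fun _ hx ↦ hx.measure_zero ν

end MeasureTheory.Measure

theorem L1_bisector_measure_zero_general (a₁ b₁ a₂ b₂ : ℝ)
    (hdiag : |a₁ - a₂| ≠ |b₁ - b₂|) :
    volume {q : ℝ × ℝ | |q.1 - a₁| + |q.2 - b₁| = |q.1 - a₂| + |q.2 - b₂|} = 0 := by
  have hg : ∀ c, |c| = |b₁ - b₂| → {x : ℝ | |x - a₂| - |x - a₁| = c}.Subsingleton :=
    fun c hc ↦ subsingleton_abs_sub_sub_abs_sub_eq <| by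
      rw [hc, ne_comm, abs_sub_comm a₂]; exact hdiag
  have hbad : ∀ᵐ x : ℝ, |(|x - a₂| - |x - a₁|)| ≠ |b₁ - b₂| := by
    have hnull := measure_union_null ((hg _ rfl).measure_zero volume)
      ((hg _ (abs_neg _)).measure_zero volume)
    refine measure_mono_null (fun x hx ↦ ?_) hnull
    simpa [abs_eq_abs, or_iff_not_imp_left] using hx
  rw [Measure.volume_eq_prod]
  refine Measure.measure_prod_null_of_ae_subsingleton
    (measurableSet_eq_fun (by fun_prop) (by fun_prop)) ?_
  filter_upwards [hbad] with x hx
  refine (subsingleton_abs_sub_sub_abs_sub_eq hx).anti fun y hy ↦ ?_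
  change |x - a₁| + |y - b₁| = |x - a₂| + |y - b₂| at hy
  change |y - b₁| - |y - b₂| = |x - a₂| - |x - a₁|
  linarith

/-- If `p₁ = (a₁,b₁)` and `p₂ = (a₂,b₂)` differ in both coordinates and do not
lie on a common line of slope `±1` (`|a₁−a₂| ≠ |b₁−b₂|`), then their L1
bisector has 2-dimensional Lebesgue measure zero. -/
theorem L1_bisector_measure_zero (a₁ b₁ a₂ b₂ : ℝ) (ha : a₁ ≠ a₂) (hb : b₁ ≠ b₂)
    (hdiag : |a₁ - a₂| ≠ |b₁ - b₂|) :
    volume {q : ℝ × ℝ | |q.1 - a₁| + |q.2 - b₁| = |q.1 - a₂| + |q.2 - b₂|} = 0 :=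
  L1_bisector_measure_zero_general a₁ b₁ a₂ b₂ hdiag
end
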